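/- arXiv:0803.0297 — 6 statements merged into one kernel-verified Lean document; each statement's English description precedes it below -/
import Mathlib

section
/- Modulo the subgroup 2πi·log Q* of C, one has Li₂(1/3) + Li₂(−1/2) + (1/2)(log(3/2))² = 0, where Li₂ is the dilogarithm defined by analytic continuation of the series ∑ zⁿ/n². -/
/-!
Landen's identity `Li₂(z) + Li₂(z/(z-1)) = -½ log²(1-z)` holds wherever both series converge
(`‖z‖ < 1`, `Re z < 1/2`): since `z · Li₂'(z) = -log(1-z)`, the difference of the two sides has
zero derivative on that convex region and vanishes at `0`. At `z = 1/3` one has `z/(z-1) = -1/2`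
and `1 - z = (3/2)⁻¹`, so the element in question is exactly `0`.
-/

open Complex

/-- The dilogarithm, defined by the series `∑ zⁿ/n²` (convergent for `|z| < 1`,
and extended by analytic continuation in general; for the arguments `1/3` and `-1/2`
used below the series converges). -/
noncomputable def dilog (z : ℂ) : ℂ := ∑' n : ℕ, z ^ n / (n : ℂ) ^ 2

/-- The subgroup `2πi·log ℚ*` of `ℂ`, spanned by `(2πi)²` and the elements
`2πi·log q` for `q ∈ ℚ*`. -/
noncomputable def logQStarSubgroup : AddSubgroup ℂ :=
  AddSubgroup.closure ({(2 * (Real.pi : ℂ) * I) ^ 2} ∪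
    {z : ℂ | ∃ q : ℚ, q ≠ 0 ∧ z = 2 * (Real.pi : ℂ) * I * Complex.log (q : ℂ)})

lemma norm_div_natCast_add_one_le (w : ℂ) (n : ℕ) : ‖w / ((n : ℂ) + 1)‖ ≤ ‖w‖ := by
  have hn : ‖(n : ℂ) + 1‖ = n + 1 := by exact_mod_cast Complex.norm_natCast (n + 1)
  rw [norm_div, hn]
  exact div_le_self (norm_nonneg w) (by linarith [n.cast_nonneg (α := ℝ)])

-- The `n = 0` term of the defining series is `0 ^ 0 / 0 = 0`, whatever `z` is.
lemma dilog_eq_tsum_succ (z : ℂ) : dilog z = ∑' n : ℕ, z ^ (n + 1) / ((n : ℂ) + 1) ^ 2 := by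
  rw [dilog, ← Nat.succ_injective.tsum_eq]
  · simp
  · rintro (_ | m) hn
    · simp at hn
    · exact ⟨m, rfl⟩

lemma dilog_zero : dilog 0 = 0 := by
  simp [dilog_eq_tsum_succ]

lemma hasDerivAt_dilog {z : ℂ} (hz : ‖z‖ < 1) :
    HasDerivAt dilog (∑' n : ℕ, z ^ n / ((n : ℂ) + 1)) z := by
  obtain ⟨r, hzr, hr⟩ := exists_between hz
  rw [show dilog = fun w ↦ ∑' n : ℕ, w ^ (n + 1) / ((n : ℂ) + 1) ^ 2 from
    funext dilog_eq_tsum_succ]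
  refine hasDerivAt_tsum_of_isPreconnected (u := fun n : ℕ ↦ r ^ n)
    (g := fun n w ↦ w ^ (n + 1) / ((n : ℂ) + 1) ^ 2) (g' := fun n w ↦ w ^ n / ((n : ℂ) + 1))
    (summable_geometric_of_lt_one (norm_nonneg z |>.trans hzr.le) hr)
    Metric.isOpen_ball (convex_ball (0 : ℂ) r).isPreconnected (fun n w _ ↦ ?_) (fun n w hw ↦ ?_)
    (Metric.mem_ball_self ((norm_nonneg z).trans_lt hzr)) ?_ (mem_ball_zero_iff.2 hzr)
  · have hn : (n : ℂ) + 1 ≠ 0 := Nat.cast_add_one_ne_zero n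
    refine ((hasDerivAt_pow (n + 1) w).div_const (((n : ℂ) + 1) ^ 2)).congr_deriv ?_
    push_cast
    field_simp
  · calc ‖w ^ n / ((n : ℂ) + 1)‖ ≤ ‖w‖ ^ n := by
          simpa using norm_div_natCast_add_one_le (w ^ n) n
      _ ≤ r ^ n := pow_le_pow_left₀ (norm_nonneg w) (mem_ball_zero_iff.1 hw).le n
  · simp

lemma mul_tsum_pow_div_succ {z : ℂ} (hz : ‖z‖ < 1) :
    z * ∑' n : ℕ, z ^ n / ((n : ℂ) + 1) = -log (1 - z) := by
  rw [← tsum_mul_left, ← (hasSum_taylorSeries_neg_log' hz).tsum_eq]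
  simp only [pow_succ', mul_div_assoc]

lemma norm_div_sub_one_lt_one {z : ℂ} (hre : z.re < 1 / 2) : ‖z / (z - 1)‖ < 1 := by
  have hsub : z - 1 ≠ 0 := fun h ↦ by norm_num [sub_eq_zero.1 h] at hre
  rw [norm_div, div_lt_one (norm_pos_iff.2 hsub), ← sq_lt_sq₀ (norm_nonneg _) (norm_nonneg _),
    Complex.sq_norm, Complex.sq_norm, Complex.normSq_apply, Complex.normSq_apply]
  simp only [sub_re, one_re, sub_im, one_im, sub_zero]
  nlinarith

lemma one_sub_div_sub_one {z : ℂ} (hz : z ≠ 1) : 1 - z / (z - 1) = (1 - z)⁻¹ := by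
  have : z - 1 ≠ 0 := sub_ne_zero.2 hz
  have : 1 - z ≠ 0 := sub_ne_zero.2 hz.symm
  field_simp
  ring

lemma hasDerivAt_landen {z : ℂ} (hz : ‖z‖ < 1) (hre : z.re < 1 / 2) :
    HasDerivAt (fun w ↦ dilog w + dilog (w / (w - 1)) + 1 / 2 * log (1 - w) ^ 2) 0 z := by
  have hz1 : z ≠ 1 := fun h ↦ by norm_num [h] at hre
  have hsub : z - 1 ≠ 0 := sub_ne_zero.2 hz1
  have hslit : 1 - z ∈ slitPlane := by
    simpa [sub_eq_add_neg] using mem_slitPlane_of_norm_lt_one (z := -z) (by simpa using hz)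
  set u := z / (z - 1)
  have hu : ‖u‖ < 1 := norm_div_sub_one_lt_one hre
  have hdu : HasDerivAt (fun w ↦ w / (w - 1)) (-1 / (z - 1) ^ 2) z := by
    refine ((hasDerivAt_id z).div ((hasDerivAt_id z).sub_const 1) hsub).congr_deriv ?_
    simp only [id]
    ring
  have hlog : HasDerivAt (fun w ↦ log (1 - w)) ((1 - z)⁻¹ * -1) z :=
    (hasDerivAt_log hslit).comp z ((hasDerivAt_id z).const_sub 1)
  refine (((hasDerivAt_dilog hz).add ((hasDerivAt_dilog hu).comp z hdu)).add
    ((hlog.pow 2).const_mul (1 / 2))).congr_deriv ?_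
  -- At `0` the two `dilog` terms have the same derivative series and cancel.
  rcases eq_or_ne z 0 with rfl | hz0
  · simp [u]
  have hS := mul_tsum_pow_div_succ hz
  have hT := mul_tsum_pow_div_succ hu
  rw [one_sub_div_sub_one hz1, log_inv _ (slitPlane_arg_ne_pi hslit)] at hT
  generalize ∑' n : ℕ, z ^ n / ((n : ℂ) + 1) = S at hS ⊢
  generalize ∑' n : ℕ, u ^ n / ((n : ℂ) + 1) = T at hT ⊢
  simp only [u] at hT
  field_simp at hT ⊢
  -- The series are known only through `z * S` and `u * T`, so we check that `z` times the derivative vanishes.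
  refine mul_left_cancel₀ hz0 ?_
  linear_combination 2 * (1 - z) * (z - 1) ^ 2 * hS - 2 * (1 - z) * hT

theorem dilog_add_dilog_div_sub_one {z : ℂ} (hz : ‖z‖ < 1) (hre : z.re < 1 / 2) :
    dilog z + dilog (z / (z - 1)) = -(1 / 2) * log (1 - z) ^ 2 := by
  let D : Set ℂ := Metric.ball 0 1 ∩ {w | w.re < 1 / 2}
  have hD : IsOpen D := Metric.isOpen_ball.inter (isOpen_lt continuous_re continuous_const)
  have hderiv (w : ℂ) (hw : w ∈ D) := hasDerivAt_landen (mem_ball_zero_iff.1 hw.1) hw.2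
  have hconst := hD.is_const_of_deriv_eq_zero
    ((convex_ball 0 1).inter (convex_halfSpace_re_lt _)).isPreconnected
    (fun w hw ↦ (hderiv w hw).differentiableAt.differentiableWithinAt)
    (fun w hw ↦ (hderiv w hw).deriv) (x := z) (y := 0) ⟨mem_ball_zero_iff.2 hz, hre⟩
    ⟨Metric.mem_ball_self one_pos, by norm_num⟩
  simp only [dilog_zero, zero_div, sub_zero, log_one] at hconst
  linear_combination hconst

/-- `Li₂(1/3) + Li₂(−1/2) + (1/2)(log(3/2))² = 0` modulo `2πi·log ℚ*`. -/
theorem stmt0 :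
    dilog (1 / 3) + dilog (-(1 / 2)) + (1 / 2) * (Complex.log ((3 : ℂ) / 2)) ^ 2
      ∈ logQStarSubgroup := by
  have hlanden := dilog_add_dilog_div_sub_one (z := 1 / 3) (by norm_num) (by norm_num)
  have hlog : log (1 - 1 / 3) = -log (3 / 2) := by
    rw [show (1 : ℂ) - 1 / 3 = (3 / 2)⁻¹ by norm_num,
      log_inv _ (slitPlane_arg_ne_pi (Or.inl (by norm_num)))]
  rw [show (1 : ℂ) / 3 / (1 / 3 - 1) = -(1 / 2) by norm_num, hlog, neg_sq] at hlanden
  rw [hlanden, neg_mul, neg_add_cancel]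
  exact zero_mem _
end

section
/- For the map Δ: Z[Q* − {1}] → Q* ⊗ Q*, {z} ↦ −(1−z) ⊗ z, extended linearly, and any five distinct points x₁,…,x₅ of P¹(Q), the alternating sum ∑_{i=1}^{5} (−1)^i {r(x₁,…,x̂ᵢ,…,x₅)} lies in the kernel of the induced map to (Q* ⊗ Q*) ⊗ Q antisymmetrized: δ{z} = −(1−z) ∧ z kills the five-term element. -/
/-!
Write `d_{jk}` for the `2 × 2` minors of the homogeneous coordinates. For four points the
Plücker relation `d₀₁d₂₃ - d₀₂d₁₃ + d₀₃d₁₂ = 0` gives `1 - r = -d₀₁d₂₃ / (d₁₂d₀₃)` next to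
`r = d₀₂d₁₃ / (d₁₂d₀₃)`. Since `-1` is torsion, it dies in `ℚ* ⊗ ℚ`, so the classes of `1 - r`
and `r` are `ℤ`-combinations of the classes of the ten minors. Hence `δ` of the five-term
element is a combination of wedges of these ten classes, and it cancels formally: the identity
holds for any alternating bilinear map and any ten vectors.
-/

open TensorProduct

/-- The `ℚ`-vector space `ℚ* ⊗ ℚ`. -/
abbrev QStarQ := ℚ ⊗[ℤ] (Additive ℚˣ)

/-- The class of a rational number `q` in `ℚ* ⊗ ℚ` (zero if `q = 0`). -/
noncomputable def toQStarQ (q : ℚ) : QStarQ :=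
  if h : q ≠ 0 then (1 : ℚ) ⊗ₜ[ℤ] Additive.ofMul (Units.mk0 q h) else 0

/-- The map `δ{z} = −(1−z) ∧ z`, with values in `Λ²(ℚ* ⊗ ℚ)`
(realized inside the exterior algebra of `ℚ* ⊗ ℚ`). -/
noncomputable def deltaEl (z : ℚ) : ExteriorAlgebra ℚ QStarQ :=
  - (ExteriorAlgebra.ι ℚ (toQStarQ (1 - z)) * ExteriorAlgebra.ι ℚ (toQStarQ z))

/-- `2×2` determinant of homogeneous coordinates: nonzero iff two points of `P¹(ℚ)`
(given by coordinate vectors) are distinct. -/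
def crd (v : Fin 5 → ℚ × ℚ) (i j : Fin 5) : ℚ := (v i).1 * (v j).2 - (v j).1 * (v i).2

/-- The cross-ratio `r(x₁,…,x̂ᵢ,…,x₅)` of the four points of `P¹(ℚ)` obtained by omitting
the `i`-th one, expressed in homogeneous coordinates; for the normalization
`r(∞,0,1,x) = x` one has `r(z₁,z₂,z₃,z₄) = (d₁₃ d₂₄)/(d₂₃ d₁₄)` with `d_{ij} = crd v i j`. -/
def crossRatioOmit (v : Fin 5 → ℚ × ℚ) (i : Fin 5) : ℚ :=
  (crd v (i.succAbove 0) (i.succAbove 2) * crd v (i.succAbove 1) (i.succAbove 3)) /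
  (crd v (i.succAbove 1) (i.succAbove 2) * crd v (i.succAbove 0) (i.succAbove 3))

section FiveTerm

variable {M : Type*} [AddCommGroup M]

/-- With `L j k` standing for the logarithm of the minor `d_{jk}`, `oneSubCrossRatioLog L i` and
`crossRatioLog L i` are the logarithms of `1 - r` and `r` for the cross-ratio `r` of the four
points other than the `i`-th one. -/
def oneSubCrossRatioLog (L : Fin 5 → Fin 5 → M) (i : Fin 5) : M :=
  L (i.succAbove 0) (i.succAbove 1) + L (i.succAbove 2) (i.succAbove 3)
    - (L (i.succAbove 1) (i.succAbove 2) + L (i.succAbove 0) (i.succAbove 3))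

def crossRatioLog (L : Fin 5 → Fin 5 → M) (i : Fin 5) : M :=
  L (i.succAbove 0) (i.succAbove 2) + L (i.succAbove 1) (i.succAbove 3)
    - (L (i.succAbove 1) (i.succAbove 2) + L (i.succAbove 0) (i.succAbove 3))

theorem sum_alternating_oneSubCrossRatioLog_crossRatioLog {R N : Type*} [CommRing R]
    [Module R M] [AddCommGroup N] [Module R N] (f : M →ₗ[R] M →ₗ[R] N) (hf : ∀ x, f x x = 0)
    (L : Fin 5 → Fin 5 → M) :
    ∑ i : Fin 5, (-1 : ℤ) ^ (i : ℕ) • f (oneSubCrossRatioLog L i) (crossRatioLog L i) = 0 := by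
  have hswap : ∀ i j k l : Fin 5, 5 * (k : ℕ) + l < 5 * (i : ℕ) + j →
      f (L i j) (L k l) = -f (L k l) (L i j) := fun i j k l _ => by
    have := hf (L i j + L k l)
    simp only [map_add, LinearMap.add_apply, hf, zero_add, add_zero] at this
    exact eq_neg_of_add_eq_zero_right this
  simp (disch := decide) only [oneSubCrossRatioLog, crossRatioLog, Fin.sum_univ_five,
    Fin.succAbove_of_castSucc_lt, Fin.succAbove_of_le_castSucc]
  simp only [Fin.succ_zero_eq_one, Fin.reduceSucc, Fin.castSucc_zero, Fin.reduceCastSucc,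
    Fin.isValue, Fin.coe_ofNat_eq_mod, Nat.reduceMod, Int.reducePow, one_smul, neg_smul]
  simp only [map_add, map_sub, LinearMap.add_apply, LinearMap.sub_apply, hf]
  -- orient every wedge `f (L i j) (L k l)` by the lexicographic order of `(i, j)` and `(k, l)`
  simp (disch := decide) only [hswap]
  abel

end FiveTerm

theorem rat_tmul_eq_zero_of_nsmul_eq_zero {M : Type*} [AddCommGroup M] {n : ℕ} (hn : n ≠ 0)
    {x : M} (hx : n • x = 0) (q : ℚ) : q ⊗ₜ[ℤ] x = 0 := by
  calc q ⊗ₜ[ℤ] x = ((n : ℤ) • (q / n)) ⊗ₜ[ℤ] x := by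
        rw [zsmul_eq_mul, Int.cast_natCast, mul_div_cancel₀ q (Nat.cast_ne_zero.mpr hn)]
    _ = 0 := by rw [smul_tmul, natCast_zsmul, hx, tmul_zero]

theorem toQStarQ_mul {x y : ℚ} (hx : x ≠ 0) (hy : y ≠ 0) :
    toQStarQ (x * y) = toQStarQ x + toQStarQ y := by
  have hxy : Units.mk0 (x * y) (mul_ne_zero hx hy) = Units.mk0 x hx * Units.mk0 y hy := by
    ext; rfl
  simp only [toQStarQ, dif_pos hx, dif_pos hy, dif_pos (mul_ne_zero hx hy), hxy, ofMul_mul,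
    tmul_add]

theorem toQStarQ_div {x y : ℚ} (hx : x ≠ 0) (hy : y ≠ 0) :
    toQStarQ (x / y) = toQStarQ x - toQStarQ y := by
  have hxy : Units.mk0 (x / y) (div_ne_zero hx hy) = Units.mk0 x hx / Units.mk0 y hy := by
    ext; rfl
  simp only [toQStarQ, dif_pos hx, dif_pos hy, dif_pos (div_ne_zero hx hy), hxy, ofMul_div,
    tmul_sub]

theorem toQStarQ_neg (x : ℚ) : toQStarQ (-x) = toQStarQ x := by
  by_cases hx : x = 0
  · rw [hx, neg_zero]
  have hneg : Units.mk0 (-x) (neg_ne_zero.mpr hx) = -1 * Units.mk0 x hx := by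
    ext; simp
  have htors : (1 : ℚ) ⊗ₜ[ℤ] Additive.ofMul (-1 : ℚˣ) = 0 :=
    rat_tmul_eq_zero_of_nsmul_eq_zero two_ne_zero (by rw [← ofMul_pow]; norm_num) 1
  simp only [toQStarQ, dif_pos hx, dif_pos (neg_ne_zero.mpr hx), hneg, ofMul_mul, tmul_add,
    htors, zero_add]

theorem crd_plucker (v : Fin 5 → ℚ × ℚ) (a b c d : Fin 5) :
    crd v a b * crd v c d - crd v a c * crd v b d + crd v a d * crd v b c = 0 := by
  simp only [crd]
  ring

section CrossRatio

variable {v : Fin 5 → ℚ × ℚ} (hdist : ∀ i j : Fin 5, i ≠ j → crd v i j ≠ 0) (i : Fin 5)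
include hdist

theorem one_sub_crossRatioOmit :
    1 - crossRatioOmit v i =
      -(crd v (i.succAbove 0) (i.succAbove 1) * crd v (i.succAbove 2) (i.succAbove 3) /
        (crd v (i.succAbove 1) (i.succAbove 2) * crd v (i.succAbove 0) (i.succAbove 3))) := by
  have h12 : crd v (i.succAbove 1) (i.succAbove 2) ≠ 0 :=
    hdist _ _ (Fin.succAbove_right_injective.ne (by decide))
  have h03 : crd v (i.succAbove 0) (i.succAbove 3) ≠ 0 :=
    hdist _ _ (Fin.succAbove_right_injective.ne (by decide))
  rw [crossRatioOmit]
  field_simp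
  linear_combination crd_plucker v (i.succAbove 0) (i.succAbove 1) (i.succAbove 2) (i.succAbove 3)

theorem toQStarQ_crossRatioOmit :
    toQStarQ (crossRatioOmit v i) = crossRatioLog (fun j k => toQStarQ (crd v j k)) i := by
  rw [crossRatioOmit, crossRatioLog, toQStarQ_div, toQStarQ_mul, toQStarQ_mul] <;>
    apply_rules [mul_ne_zero, hdist, Fin.succAbove_right_injective.ne] <;> decide

theorem toQStarQ_one_sub_crossRatioOmit :
    toQStarQ (1 - crossRatioOmit v i) =
      oneSubCrossRatioLog (fun j k => toQStarQ (crd v j k)) i := by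
  rw [one_sub_crossRatioOmit hdist, toQStarQ_neg, oneSubCrossRatioLog, toQStarQ_div,
    toQStarQ_mul, toQStarQ_mul] <;>
    apply_rules [mul_ne_zero, hdist, Fin.succAbove_right_injective.ne] <;> decide

end CrossRatio

theorem stmt2_general (v : Fin 5 → ℚ × ℚ)
    (hdist : ∀ i j : Fin 5, i ≠ j → crd v i j ≠ 0) :
    ∑ i : Fin 5, ((-1 : ℤ) ^ (i : ℕ)) • deltaEl (crossRatioOmit v i) = 0 := by
  have hwedge := sum_alternating_oneSubCrossRatioLog_crossRatioLog
    ((LinearMap.mul ℚ (ExteriorAlgebra ℚ QStarQ)).compl₁₂ (ExteriorAlgebra.ι ℚ)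
      (ExteriorAlgebra.ι ℚ)) (ExteriorAlgebra.ι_sq_zero) (fun j k => toQStarQ (crd v j k))
  simp only [deltaEl, toQStarQ_one_sub_crossRatioOmit hdist, toQStarQ_crossRatioOmit hdist,
    smul_neg, Finset.sum_neg_distrib, neg_eq_zero]
  simpa only [LinearMap.compl₁₂_apply, LinearMap.mul_apply'] using hwedge

/-- The five-term element is killed by `δ{z} = −(1−z) ∧ z`:
for five distinct points of `P¹(ℚ)` (distinctness expressed by nonvanishing of the
`2×2` minors of homogeneous coordinates), assuming no cross-ratio equals `0` or `1`,
one has `δ(∑ᵢ (−1)^i {r(x₁,…,x̂ᵢ,…,x₅)}) = 0` in `Λ²(ℚ* ⊗ ℚ)`. -/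
theorem stmt2 (v : Fin 5 → ℚ × ℚ)
    (hdist : ∀ i j : Fin 5, i ≠ j → crd v i j ≠ 0)
    (hne : ∀ i, crossRatioOmit v i ≠ 0 ∧ crossRatioOmit v i ≠ 1) :
    ∑ i : Fin 5, ((-1 : ℤ) ^ (i : ℕ)) • deltaEl (crossRatioOmit v i) = 0 :=
  stmt2_general v hdist
end

section
/- In the free associative algebra B generated by a finite set S, with the cyclic envelope C(B) := B⁺/[B⁺,B⁺] and partial derivatives ∂/∂X_s: C(B) → B given by deleting one occurrence of X_s and summing over all occurrences, one has for every F ∈ C(B): ∑_{s∈S} [∂F/∂X_s, X_s] = 0 in B. -/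
/-!
Write `R i` for the product of the word rotated by `i`. Moving the letter `wᵢ` from the end to the
front of the `i+1`-st rotation gives `[X_{w_{i+1}} ⋯ X_{w_{i−1}}, X_{w_i}] = R (i+1) - R i`, so the
sum telescopes to `R n - R 0`, and both ends are the product of the word itself.
-/

section CyclicWord

variable {S A : Type*} [Ring A] (f : S → A)

theorem lie_prod_map_drop_append_take {w : List S} {i : ℕ} (hi : i < w.length) :
    ⁅((w.drop (i + 1) ++ w.take i).map f).prod, f w[i]⁆ =
      ((w.drop (i + 1) ++ w.take (i + 1)).map f).prod - ((w.drop i ++ w.take i).map f).prod := by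
  rw [Ring.lie_def, List.take_add_one, List.getElem?_eq_getElem hi, List.drop_eq_getElem_cons hi]
  simp only [Option.toList_some, List.map_append, List.map_cons, List.map_nil, List.prod_append,
    List.prod_cons, List.prod_nil, mul_one, mul_assoc]

theorem sum_lie_prod_map_drop_append_take (w : List S) :
    ∑ i : Fin w.length, ⁅((w.drop ((i : ℕ) + 1) ++ w.take (i : ℕ)).map f).prod, f (w.get i)⁆ = 0 := by
  let rotationProd : ℕ → A := fun i => ((w.drop i ++ w.take i).map f).prod
  calc _ = ∑ i ∈ Finset.range w.length, (rotationProd (i + 1) - rotationProd i) := by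
        rw [← Fin.sum_univ_eq_sum_range]
        exact Finset.sum_congr rfl fun i _ => lie_prod_map_drop_append_take f i.isLt
    _ = rotationProd w.length - rotationProd 0 := Finset.sum_range_sub rotationProd _
    _ = 0 := by
      simp only [rotationProd, List.drop_length, List.take_length, List.drop_zero, List.take_zero,
        List.nil_append, List.append_nil, sub_self]

end CyclicWord

/-- For the free associative algebra `B` on a set `S` of generators and a cyclic word
`F = C(X_{w₀} ⋯ X_{w_{k−1}})` (cyclic words span the cyclic envelope
`C(B) = B⁺/[B⁺,B⁺]`), the cyclic partial derivatives
`∂F/∂X_s = ∑_{i : wᵢ = s} X_{w_{i+1}} ⋯ X_{w_{i−1}}` satisfy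
`∑_{s∈S} [∂F/∂X_s, X_s] = 0`.  Grouping the occurrences by position, this reads:
`∑_i [X_{w_{i+1}} ⋯ X_{w_{i−1}}, X_{w_i}] = 0`. -/
theorem stmt10 {S : Type*} (w : List S) :
    ∑ i : Fin w.length,
      ⁅((w.drop ((i : ℕ) + 1) ++ w.take (i : ℕ)).map (FreeAlgebra.ι ℚ)).prod,
        FreeAlgebra.ι ℚ (w.get i)⁆ = 0 :=
  sum_lie_prod_map_drop_append_take (FreeAlgebra.ι ℚ) w
end

section
/- Let H be a finite-dimensional symplectic vector space over Q with symplectic basis {pᵢ, qᵢ}, S* a finite set, and A = A_{H,S*} the free associative algebra on H ⊕ Q[S*]. For F in the cyclic envelope C⁺(A), the assignment κ_F: pᵢ ↦ −∂F/∂qᵢ, qᵢ ↦ ∂F/∂pᵢ, X_s ↦ [X_s, ∂F/∂X_s] (s ∈ S*) extends to a derivation of A that annihilates the element X₀ := −∑_{s∈S*} X_s − ∑ᵢ [pᵢ, qᵢ]; i.e., κ_F is a special derivation. -/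
/-!
The square-zero extension `A ⊕ εA` turns any assignment on the generators of the free algebra
into a derivation `D`. Since `D [pᵢ, qᵢ] = [qᵢ, ∂F/∂qᵢ] + [pᵢ, ∂F/∂pᵢ]`, we get
`D X₀ = -∑_Y [Y, ∂F/∂Y]`, which vanishes word by word: for a cyclic word `w`, both `∑_Y Y ∂w/∂Y`
and `∑_Y ∂w/∂Y Y` are the sum of all rotations of `w`.
-/

/-- The generators of `A_{H,S*}`: a symplectic basis `pᵢ, qᵢ` (`i : Fin n`) of `H`
and generators `X_s` for `s ∈ S*`. -/
abbrev SympGen (n : ℕ) (S : Type) : Type := (Fin n ⊕ Fin n) ⊕ S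

/-- The product of generators corresponding to a word. -/
noncomputable def wordProd {n : ℕ} {S : Type} (w : List (SympGen n S)) :
    FreeAlgebra ℚ (SympGen n S) :=
  (w.map (FreeAlgebra.ι ℚ)).prod

/-- The cyclic derivative `∂/∂Y` of the cyclic word of `w`: delete one occurrence of
`Y` and read the remaining letters cyclically, summing over all occurrences. -/
noncomputable def cyclicDeriv {n : ℕ} {S : Type} [DecidableEq S]
    (w : List (SympGen n S)) (Y : SympGen n S) : FreeAlgebra ℚ (SympGen n S) :=
  ∑ i : Fin w.length,
    if w.get i = Y then wordProd (w.drop ((i : ℕ) + 1) ++ w.take (i : ℕ)) else 0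

/-- The cyclic derivative of a general element `F` of the cyclic envelope `C⁺(A)`,
presented as a finite `ℚ`-linear combination of cyclic words. -/
noncomputable def cyclicDerivF {n : ℕ} {S : Type} [DecidableEq S]
    (F : List (SympGen n S) →₀ ℚ) (Y : SympGen n S) : FreeAlgebra ℚ (SympGen n S) :=
  F.sum fun w c => c • cyclicDeriv w Y

namespace FreeAlgebra

variable {R X : Type*} [CommRing R]

/-- An algebra map `A → A ⊕ εA` (`ε² = 0`) lifting the identity is `a ↦ a + ε D a` for a
derivation `D`. -/
@[simps]
noncomputable def liftDerivation (d : X → FreeAlgebra R X) :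
    FreeAlgebra R X →ₗ[R] FreeAlgebra R X where
  toFun a := (lift R (fun x => TrivSqZeroExt.inl (ι R x) + TrivSqZeroExt.inr (d x)) a).snd
  map_add' a b := by simp
  map_smul' c a := by simp

variable (d : X → FreeAlgebra R X)

theorem fst_lift_inl_add_inr (a : FreeAlgebra R X) :
    (lift R (fun x => TrivSqZeroExt.inl (ι R x) + TrivSqZeroExt.inr (d x)) a).fst = a := by
  have h : (TrivSqZeroExt.fstHom R _ _).comp
      (lift R fun x => TrivSqZeroExt.inl (ι R x) + TrivSqZeroExt.inr (d x)) = AlgHom.id R _ := by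
    ext x
    simp
  exact AlgHom.congr_fun h a

@[simp]
theorem liftDerivation_ι (x : X) : liftDerivation d (ι R x) = d x := by
  simp [liftDerivation]

theorem liftDerivation_mul (a b : FreeAlgebra R X) :
    liftDerivation d (a * b) = liftDerivation d a * b + a * liftDerivation d b := by
  simp only [liftDerivation_apply, map_mul, TrivSqZeroExt.snd_mul, fst_lift_inl_add_inr,
    smul_eq_mul, op_smul_eq_mul]
  rw [add_comm]

theorem liftDerivation_lie (a b : FreeAlgebra R X) :
    liftDerivation d ⁅a, b⁆ = ⁅liftDerivation d a, b⁆ + ⁅a, liftDerivation d b⁆ := by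
  simp only [Ring.lie_def, map_sub, liftDerivation_mul]
  abel

end FreeAlgebra

section CyclicDeriv

variable {n : ℕ} {S : Type} [DecidableEq S] [Fintype S]

theorem sum_ι_mul_cyclicDeriv (w : List (SympGen n S)) :
    ∑ Y, FreeAlgebra.ι ℚ Y * cyclicDeriv w Y = ∑ i : Fin w.length, wordProd (w.rotate i) := by
  simp only [cyclicDeriv, Finset.mul_sum, mul_ite, mul_zero]
  rw [Finset.sum_comm]
  refine Finset.sum_congr rfl fun i _ => ?_
  rw [Finset.sum_ite_eq Finset.univ (w.get i), if_pos (Finset.mem_univ _),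
    List.rotate_eq_drop_append_take i.isLt.le, List.drop_eq_getElem_cons i.isLt]
  simp only [wordProd, List.cons_append, List.map_cons, List.prod_cons, List.get_eq_getElem]

theorem sum_cyclicDeriv_mul_ι (w : List (SympGen n S)) :
    ∑ Y, cyclicDeriv w Y * FreeAlgebra.ι ℚ Y =
      ∑ i : Fin w.length, wordProd (w.rotate (i + 1)) := by
  simp only [cyclicDeriv, Finset.sum_mul, ite_mul, zero_mul]
  rw [Finset.sum_comm]
  refine Finset.sum_congr rfl fun i _ => ?_
  rw [Finset.sum_ite_eq Finset.univ (w.get i), if_pos (Finset.mem_univ _),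
    List.rotate_eq_drop_append_take i.isLt, ← List.take_concat_get i.isLt]
  simp [wordProd, mul_assoc]

theorem sum_lie_ι_cyclicDeriv (w : List (SympGen n S)) :
    ∑ Y, ⁅FreeAlgebra.ι ℚ Y, cyclicDeriv w Y⁆ = 0 := by
  simp only [Ring.lie_def, Finset.sum_sub_distrib, sum_ι_mul_cyclicDeriv, sum_cyclicDeriv_mul_ι]
  rw [← Finset.sum_sub_distrib,
    Fin.sum_univ_eq_sum_range (fun i => wordProd (w.rotate i) - wordProd (w.rotate (i + 1))),
    Finset.sum_range_sub' (fun i => wordProd (w.rotate i)), List.rotate_zero,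
    List.rotate_length, sub_self]

theorem sum_lie_ι_cyclicDerivF (F : List (SympGen n S) →₀ ℚ) :
    ∑ Y, ⁅FreeAlgebra.ι ℚ Y, cyclicDerivF F Y⁆ = 0 := by
  simp only [cyclicDerivF, Finsupp.sum, Ring.lie_def, Finset.mul_sum, Finset.sum_mul,
    mul_smul_comm, smul_mul_assoc, ← smul_sub, ← Finset.sum_sub_distrib]
  rw [Finset.sum_comm]
  refine Finset.sum_eq_zero fun w _ => ?_
  rw [← Finset.smul_sum]
  simp only [← Ring.lie_def, sum_lie_ι_cyclicDeriv, smul_zero]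

/-- `κ_F`, with `pᵢ = inl (inl i)`, `qᵢ = inl (inr i)`, `X_s = inr s`. -/
noncomputable def kappa (F : List (SympGen n S) →₀ ℚ) : SympGen n S → FreeAlgebra ℚ (SympGen n S)
  | Sum.inl (Sum.inl i) => -cyclicDerivF F (Sum.inl (Sum.inr i))
  | Sum.inl (Sum.inr i) => cyclicDerivF F (Sum.inl (Sum.inl i))
  | Sum.inr s => ⁅FreeAlgebra.ι ℚ (Sum.inr s : SympGen n S), cyclicDerivF F (Sum.inr s)⁆

end CyclicDeriv

/-- For every `F` in the cyclic envelope of `A = A_{H,S*}`, the assignment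
`κ_F : pᵢ ↦ −∂F/∂qᵢ, qᵢ ↦ ∂F/∂pᵢ, X_s ↦ [X_s, ∂F/∂X_s]` extends to a derivation of
`A` annihilating `X₀ := −∑_{s∈S*} X_s − ∑ᵢ [pᵢ, qᵢ]`, i.e. `κ_F` is a special
derivation. -/
theorem stmt11 (n : ℕ) (S : Type) [Fintype S] [DecidableEq S]
    (F : List (SympGen n S) →₀ ℚ) :
    ∃ D : FreeAlgebra ℚ (SympGen n S) →ₗ[ℚ] FreeAlgebra ℚ (SympGen n S),
      (∀ a b, D (a * b) = D a * b + a * D b) ∧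
      (∀ i : Fin n, D (FreeAlgebra.ι ℚ (Sum.inl (Sum.inl i) : SympGen n S))
          = - cyclicDerivF F (Sum.inl (Sum.inr i))) ∧
      (∀ i : Fin n, D (FreeAlgebra.ι ℚ (Sum.inl (Sum.inr i) : SympGen n S))
          = cyclicDerivF F (Sum.inl (Sum.inl i))) ∧
      (∀ s : S, D (FreeAlgebra.ι ℚ (Sum.inr s : SympGen n S))
          = ⁅FreeAlgebra.ι ℚ (Sum.inr s : SympGen n S), cyclicDerivF F (Sum.inr s)⁆) ∧
      D (- (∑ s : S, FreeAlgebra.ι ℚ (Sum.inr s : SympGen n S))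
          - ∑ i : Fin n, ⁅FreeAlgebra.ι ℚ (Sum.inl (Sum.inl i) : SympGen n S),
              FreeAlgebra.ι ℚ (Sum.inl (Sum.inr i) : SympGen n S)⁆) = 0 := by
  refine ⟨FreeAlgebra.liftDerivation (kappa F), FreeAlgebra.liftDerivation_mul _,
    fun _ => FreeAlgebra.liftDerivation_ι _ _, fun _ => FreeAlgebra.liftDerivation_ι _ _,
    fun _ => FreeAlgebra.liftDerivation_ι _ _, ?_⟩
  have hsum := sum_lie_ι_cyclicDerivF F
  simp only [Fintype.sum_sum_type] at hsum
  have neg_lie_eq (a b : FreeAlgebra ℚ (SympGen n S)) : ⁅-a, b⁆ = ⁅b, a⁆ := by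
    simp only [Ring.lie_def, neg_mul, mul_neg, sub_neg_eq_add, neg_add_eq_sub]
  simp only [map_sub, map_neg, map_sum, FreeAlgebra.liftDerivation_lie,
    FreeAlgebra.liftDerivation_ι, kappa, neg_lie_eq, Finset.sum_add_distrib]
  linear_combination (norm := abel) -hsum
end

section
/- Let Σ_{p,q} denote the set of (p,q)-shuffles of {1,…,p+q}. The Hodge correlator satisfies the shuffle relations: for any vectors v₀,…,v_{p+q} ∈ V^∨_{X,S*} and any p,q ≥ 1, ∑_{σ∈Σ_{p,q}} Cor_H C(v₀ ⊗ v_{σ(1)} ⊗ … ⊗ v_{σ(p+q)}) = 0. More abstractly: the element of the space T¹_{(m)} of oriented decorated trivalent trees given by ∑_{σ∈Σ_{p,q}} (sum over all plane trivalent trees decorated by (v₀, v_{σ(1)}, …, v_{σ(m)}) with the orientation induced by the plane) equals zero, for m = p+q. -/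
/-!
The trees of all the shuffled words form a single family: the plane trees whose low leaves
(labels `1, …, p`) and high leaves (labels `p + 1, …, m`) each appear in increasing order from
left to right. Flipping a tree at its leftmost minimal vertex whose leaves carry both colors
swaps a monochromatic low branch with a monochromatic high one. This keeps the subword of each
color, hence stays in the family, and is a fixed-point-free involution reversing the sign of `I`,
so the contributions cancel in pairs.
-/

/-- Plane binary trees with leaves labeled by `α`.  A plane trivalent tree with
`m+1` cyclically ordered external leaves, rooted at the leaf decorated by `v₀`,
is the same as such a binary tree with `m` labeled leaves (read left to right). -/
inductive PTree (α : Type) : Type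
  | leaf (a : α) : PTree α
  | node (l r : PTree α) : PTree α

/-- The flip relation: exchanging the two branches at one internal vertex.  Two plane
structures on the same abstract (non-plane) decorated tree differ by a sequence of
flips, and each flip reverses the canonical orientation of the tree induced by the
orientation of the plane. -/
inductive PTree.Flip {α : Type} : PTree α → PTree α → Prop
  | here (l r : PTree α) : PTree.Flip (.node l r) (.node r l)
  | left {l l' : PTree α} (r : PTree α) : PTree.Flip l l' → PTree.Flip (.node l r) (.node l' r)
  | right (l : PTree α) {r r' : PTree α} : PTree.Flip r r' → PTree.Flip (.node l r) (.node l r')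

/-- All plane binary trees whose leaves, read from left to right, are labeled by the
given list (with a fuel parameter for termination). -/
def allTreesFuel {α : Type} : ℕ → List α → List (PTree α)
  | _, [] => []
  | _, [a] => [PTree.leaf a]
  | 0, _ => []
  | n + 1, l =>
      (List.range (l.length - 1)).flatMap fun i =>
        (allTreesFuel n (l.take (i + 1))).flatMap fun t₁ =>
          (allTreesFuel n (l.drop (i + 1))).map fun t₂ => PTree.node t₁ t₂

/-- All plane binary trees with leaf labels given by the list `l`; equivalently, all
plane trivalent trees decorated by the cyclic word `C(v₀ ⊗ l₁ ⊗ ⋯ ⊗ l_m)`, rooted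
at `v₀`. -/
def planeTrees {α : Type} (l : List α) : List (PTree α) := allTreesFuel l.length l

/-- The `(p, m−p)`-shuffle permutations of `Fin m`. -/
def shuffleSet (m p : ℕ) : Finset (Equiv.Perm (Fin m)) :=
  Finset.univ.filter (fun π =>
    (∀ i j : Fin m, i < j → (j : ℕ) < p → π i < π j) ∧
    (∀ i j : Fin m, i < j → p ≤ (i : ℕ) → π i < π j))

/-- The word `(v_{σ(1)}, …, v_{σ(m)})` of the decorations following the root `v₀ = 0`:
position `j` carries the letter `σ(j) = π⁻¹(j)` (shifted by one to leave room for
the root label `0`). -/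
def shuffleWord (m : ℕ) (π : Equiv.Perm (Fin m)) : List (Fin (m + 1)) :=
  List.ofFn fun j : Fin m => Fin.succ (π⁻¹ j)

namespace PTree

variable {α : Type}

def leaves : PTree α → List α
  | leaf a => [a]
  | node l r => l.leaves ++ r.leaves

lemma leaves_ne_nil (t : PTree α) : t.leaves ≠ [] := by
  induction t with
  | leaf a => simp [leaves]
  | node l r ihl _ => simp [leaves, ihl]

lemma leaves_eq_singleton_iff {t : PTree α} {a : α} : t.leaves = [a] ↔ t = leaf a := by
  cases t with
  | leaf b => simp [leaves]
  | node l r => simp [leaves, List.append_eq_singleton_iff, leaves_ne_nil]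

lemma Flip.leaves_perm {t t' : PTree α} (h : Flip t t') : t'.leaves.Perm t.leaves := by
  induction h with
  | here l r => exact List.perm_append_comm
  | left r _ ih => exact ih.append_right _
  | right l _ ih => exact ih.append_left _

end PTree

open PTree

lemma List.append_eq_iff_exists_take_drop {α : Type} {x y l : List α} (hx : x ≠ [])
    (hy : y ≠ []) :
    x ++ y = l ↔ ∃ i < l.length - 1, x = l.take (i + 1) ∧ y = l.drop (i + 1) := by
  constructor
  · rintro rfl
    have hx' := List.length_pos_iff.2 hx
    have hy' := List.length_pos_iff.2 hy
    refine ⟨x.length - 1, by simp only [List.length_append]; omega, ?_, ?_⟩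
    · rw [Nat.sub_add_cancel hx', List.take_left' rfl]
    · rw [Nat.sub_add_cancel hx', List.drop_left' rfl]
  · rintro ⟨i, -, rfl, rfl⟩
    exact List.take_append_drop _ _

section PlaneTrees

variable {α : Type}

lemma mem_allTreesFuel {n : ℕ} {l : List α} (hl : l.length ≤ n + 1) {t : PTree α} :
    t ∈ allTreesFuel n l ↔ t.leaves = l := by
  induction n generalizing l t with
  | zero =>
    match l, hl with
    | [], _ => simpa [allTreesFuel] using (leaves_ne_nil t).symm
    | [a], _ => simp [allTreesFuel, leaves_eq_singleton_iff]
  | succ n ih =>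
    match l, hl with
    | [], _ => simpa [allTreesFuel] using (leaves_ne_nil t).symm
    | [a], _ => simp [allTreesFuel, leaves_eq_singleton_iff]
    | a :: b :: rest, hl =>
      cases t with
      | leaf c => simp [allTreesFuel, leaves]
      | node t₁ t₂ =>
        simp only [allTreesFuel, List.mem_flatMap, List.mem_map, List.mem_range, node.injEq,
          leaves]
        rw [List.append_eq_iff_exists_take_drop (leaves_ne_nil _) (leaves_ne_nil _)]
        refine exists_congr fun i => and_congr_right fun hi => ?_
        simp only [List.length_cons] at hi hl
        rw [← ih (by simp only [List.length_take, List.length_cons]; omega),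
          ← ih (by simp only [List.length_drop, List.length_cons]; omega)]
        simp

lemma nodup_allTreesFuel {n : ℕ} {l : List α} (hl : l.length ≤ n + 1) :
    (allTreesFuel n l).Nodup := by
  induction n generalizing l with
  | zero =>
    match l, hl with
    | [], _ => simp [allTreesFuel]
    | [a], _ => simp [allTreesFuel]
  | succ n ih =>
    match l, hl with
    | [], _ => simp [allTreesFuel]
    | [a], _ => simp [allTreesFuel]
    | a :: b :: rest, hl =>
      simp only [List.length_cons] at hl
      simp only [allTreesFuel]
      refine List.nodup_flatMap.2 ⟨fun i hi => ?_, ?_⟩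
      · simp only [List.mem_range, List.length_cons] at hi
        have hA := ih (l := (a :: b :: rest).take (i + 1))
          (by simp only [List.length_take, List.length_cons]; omega)
        have hB := ih (l := (a :: b :: rest).drop (i + 1))
          (by simp only [List.length_drop, List.length_cons]; omega)
        have := (hA.product hB).map (f := fun x => node x.1 x.2)
          (fun x y h => by injection h; ext <;> assumption)
        simpa [SProd.sprod, List.product, List.map_flatMap, Function.comp_def] using this
      · refine List.nodup_range.pairwise_of_forall_ne fun i hi j hj hij t hti htj => hij ?_
        simp only [List.mem_flatMap, List.mem_map, List.mem_range, List.length_cons]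
          at hi hj hti htj
        obtain ⟨t₁, ht₁, t₂, -, rfl⟩ := hti
        obtain ⟨s₁, hs₁, s₂, -, hs⟩ := htj
        cases hs
        rw [mem_allTreesFuel (by simp only [List.length_take, List.length_cons]; omega)]
          at ht₁ hs₁
        have := congrArg List.length (ht₁.symm.trans hs₁)
        simp only [List.length_take, List.length_cons] at this
        omega

end PlaneTrees

lemma mem_planeTrees {α : Type} {l : List α} {t : PTree α} :
    t ∈ planeTrees l ↔ t.leaves = l :=
  mem_allTreesFuel (Nat.le_succ _)

lemma nodup_planeTrees {α : Type} (l : List α) : (planeTrees l).Nodup :=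
  nodup_allTreesFuel (Nat.le_succ _)

section Bicolored

variable {α : Type} (P : α → Bool)

def bicolored (w : List α) : Bool := w.any P && w.any fun a => !P a

def flipMinBicolored : PTree α → PTree α
  | leaf a => leaf a
  | node l r =>
      if bicolored P l.leaves then node (flipMinBicolored l) r
      else if bicolored P r.leaves then node l (flipMinBicolored r)
      else node r l

variable {P}

lemma bicolored_eq_false_iff {w : List α} :
    bicolored P w = false ↔ ∃ c, ∀ a ∈ w, P a = c := by
  simp only [bicolored, Bool.and_eq_false_iff, List.any_eq_false, Bool.not_eq_true,
    Bool.not_eq_false']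
  constructor
  · rintro (h | h)
    exacts [⟨false, h⟩, ⟨true, h⟩]
  · rintro ⟨c, hc⟩
    cases c
    exacts [.inl hc, .inr hc]

lemma bicolored_leaves_leaf (a : α) : bicolored P (leaf a).leaves = false := by
  cases h : P a <;> simp [bicolored, leaves, h]

lemma List.Perm.bicolored_eq {w w' : List α} (h : w.Perm w') : bicolored P w = bicolored P w' := by
  simp only [bicolored, h.any_eq]

lemma flip_flipMinBicolored {t : PTree α} (h : bicolored P t.leaves) :
    Flip t (flipMinBicolored P t) := by
  induction t with
  | leaf a => simp [bicolored_leaves_leaf] at h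
  | node l r ihl ihr =>
    rw [flipMinBicolored]
    split_ifs with hl hr
    · exact .left r (ihl hl)
    · exact .right l (ihr hr)
    · exact .here l r

lemma bicolored_flipMinBicolored {t : PTree α} (h : bicolored P t.leaves) :
    bicolored P (flipMinBicolored P t).leaves :=
  (flip_flipMinBicolored h).leaves_perm.bicolored_eq ▸ h

lemma flipMinBicolored_flipMinBicolored {t : PTree α} (h : bicolored P t.leaves) :
    flipMinBicolored P (flipMinBicolored P t) = t := by
  induction t with
  | leaf a => simp [bicolored_leaves_leaf] at h
  | node l r ihl ihr =>
    rw [flipMinBicolored]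
    split_ifs with hl hr
    · rw [flipMinBicolored, if_pos (bicolored_flipMinBicolored hl), ihl hl]
    · rw [flipMinBicolored, if_neg hl, if_pos (bicolored_flipMinBicolored hr), ihr hr]
    · rw [flipMinBicolored, if_neg hr, if_neg hl]

lemma flipMinBicolored_ne {t : PTree α} (h : bicolored P t.leaves) :
    flipMinBicolored P t ≠ t := by
  induction t with
  | leaf a => simp [bicolored_leaves_leaf] at h
  | node l r ihl ihr =>
    rw [flipMinBicolored]
    split_ifs with hl hr
    · simpa using ihl hl
    · simpa using ihr hr
    · rintro ⟨rfl, -⟩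
      exact hl (by simpa [leaves, bicolored] using h)

lemma filter_leaves_flipMinBicolored {t : PTree α} (h : bicolored P t.leaves) (b : Bool) :
    (flipMinBicolored P t).leaves.filter (P · == b) = t.leaves.filter (P · == b) := by
  induction t with
  | leaf a => simp [bicolored_leaves_leaf] at h
  | node l r ihl ihr =>
    rw [flipMinBicolored]
    split_ifs with hl hr
    · simp only [leaves, List.filter_append, ihl hl]
    · simp only [leaves, List.filter_append, ihr hr]
    · obtain ⟨c, hc⟩ := bicolored_eq_false_iff.1 (Bool.of_not_eq_true hl)
      obtain ⟨c', hc'⟩ := bicolored_eq_false_iff.1 (Bool.of_not_eq_true hr)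
      have hcc' : c ≠ c' := by
        rintro rfl
        refine Bool.eq_false_iff.1 (bicolored_eq_false_iff.2 ⟨c, ?_⟩) h
        simp only [leaves, List.mem_append]
        rintro a (ha | ha)
        exacts [hc a ha, hc' a ha]
      have : l.leaves.filter (P · == b) = [] ∨ r.leaves.filter (P · == b) = [] := by
        simp only [List.filter_eq_nil_iff, beq_iff_eq]
        by_cases hb : c = b
        · exact .inr fun a ha => by rw [hc' a ha, ← hb]; exact hcc'.symm
        · exact .inl fun a ha => by rw [hc a ha]; exact hb
      rcases this with h0 | h0 <;> simp [leaves, List.filter_append, h0]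

end Bicolored

lemma List.perm_of_forall_filter_beq_eq {α : Type} {P : α → Bool} {w w' : List α}
    (h : ∀ b, w.filter (P · == b) = w'.filter (P · == b)) : w.Perm w' := by
  have h₁ := h true
  have h₂ := h false
  simp only [beq_true, beq_false] at h₁ h₂
  exact (List.filter_append_perm P w).symm.trans (h₁ ▸ h₂ ▸ List.filter_append_perm P w')

theorem sum_planeTrees_eq_zero {α β : Type} [AddCommGroup β] (P : α → Bool)
    (I : PTree α → β) (hflip : ∀ t t' : PTree α, Flip t t' → I t' = -I t)
    (W : Finset (List α)) (hW : ∀ w ∈ W, bicolored P w)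
    (hW_closed : ∀ w ∈ W, ∀ w', (∀ b, w'.filter (P · == b) = w.filter (P · == b)) →
      w' ∈ W) :
    ∑ w ∈ W, ((planeTrees w).map I).sum = 0 := by
  classical
  set T := W.biUnion fun w => (planeTrees w).toFinset
  have mem_T : ∀ t, t ∈ T ↔ t.leaves ∈ W := by simp [T, mem_planeTrees]
  have hT : ∀ t ∈ T, bicolored P t.leaves := fun t ht => hW _ ((mem_T t).1 ht)
  calc ∑ w ∈ W, ((planeTrees w).map I).sum = ∑ t ∈ T, I t := by
        rw [Finset.sum_biUnion]
        · exact Finset.sum_congr rfl fun w _ => (List.sum_toFinset I (nodup_planeTrees w)).symm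
        · intro w _ w' _ hww'
          simp only [Function.onFun, Finset.disjoint_left, List.mem_toFinset, mem_planeTrees]
          rintro t rfl rfl
          exact hww' rfl
    _ = 0 := by
        refine Finset.sum_involution (fun t _ => flipMinBicolored P t)
          (fun t ht => by rw [hflip _ _ (flip_flipMinBicolored (hT t ht)), add_neg_cancel])
          (fun t ht _ => flipMinBicolored_ne (hT t ht))
          (fun t ht => (mem_T _).2 (hW_closed _ ((mem_T t).1 ht) _
            (filter_leaves_flipMinBicolored (hT t ht))))
          (fun t ht => flipMinBicolored_flipMinBicolored (hT t ht))

lemma Equiv.strictMonoOn_symm_preimage_iff {α β : Type*} [LinearOrder α] [LinearOrder β]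
    (e : α ≃ β) (s : Set α) : StrictMonoOn e.symm (e.symm ⁻¹' s) ↔ StrictMonoOn e s := by
  constructor
  · intro h a ha b hb hab
    exact (h.lt_iff_lt (by simpa) (by simpa)).1 (by simpa)
  · intro h a ha b hb hab
    exact (h.lt_iff_lt ha hb).1 (by simpa)

lemma List.Perm.exists_ofFn_comp_eq {α : Type*} {n : ℕ} {f : Fin n → α}
    (hf : Function.Injective f) {w : List α} (hw : w.Perm (List.ofFn f)) :
    ∃ σ : Equiv.Perm (Fin n), List.ofFn (f ∘ σ) = w := by
  have hlen : w.length = n := by simpa using hw.length_eq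
  have hnodup : w.Nodup := hw.nodup_iff.2 (List.nodup_ofFn.2 hf)
  have hmem (j : Fin n) : ∃ i, f i = w[(j : ℕ)] := by
    simpa using hw.subset (List.getElem_mem (by omega))
  choose g hg using hmem
  have hg_inj : Function.Injective g := fun j j' hjj' =>
    Fin.ext <| (hnodup.getElem_inj_iff).1 (by rw [← hg, ← hg, hjj'])
  refine ⟨Equiv.ofBijective g hg_inj.bijective_of_finite, List.ext_getElem (by simp [hlen]) ?_⟩
  intro j _ _
  simp [hg]

def shuffleColor (p : ℕ) {n : ℕ} (a : Fin n) : Bool := decide ((a : ℕ) ≤ p)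

section Shuffles

variable {m p : ℕ}

lemma mem_shuffleSet_iff {π : Equiv.Perm (Fin m)} :
    π ∈ shuffleSet m p ↔
      StrictMonoOn π {i | (i : ℕ) < p} ∧ StrictMonoOn π {i | p ≤ (i : ℕ)} := by
  simp only [shuffleSet, Finset.mem_filter, Finset.mem_univ, true_and, StrictMonoOn,
    Set.mem_ofPred_eq]
  refine and_congr ⟨fun h i _ j hj hij => h i j hij hj, fun h i j hij hj => ?_⟩
    ⟨fun h i hi j _ hij => h i j hij hi, fun h i j hij hi => ?_⟩
  · exact h (lt_trans (Fin.lt_def.1 hij) hj) hj hij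
  · exact h hi (hi.trans (Fin.le_def.1 hij.le)) hij

lemma pairwise_filter_shuffleWord_iff (π : Equiv.Perm (Fin m)) (b : Bool) :
    ((shuffleWord m π).filter (shuffleColor p · == b)).Pairwise (· < ·) ↔
      StrictMonoOn π {i | decide ((i : ℕ) < p) = b} := by
  rw [← Equiv.strictMonoOn_symm_preimage_iff, shuffleWord, List.pairwise_filter,
    List.pairwise_ofFn]
  simp only [shuffleColor, StrictMonoOn, Set.mem_preimage, Set.mem_ofPred_eq, Fin.val_succ,
    Fin.succ_lt_succ_iff, Equiv.Perm.inv_def, beq_iff_eq, Nat.add_one_le_iff]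
  exact ⟨fun h i hi j hj hij => h hij hi hj, fun h i j hij hi hj => h hi hj hij⟩

lemma mem_shuffleSet_iff_pairwise_filter {π : Equiv.Perm (Fin m)} :
    π ∈ shuffleSet m p ↔
      ∀ b, ((shuffleWord m π).filter (shuffleColor p · == b)).Pairwise (· < ·) := by
  simp only [pairwise_filter_shuffleWord_iff, Bool.forall_bool, decide_eq_true_eq,
    decide_eq_false_iff_not, not_lt, mem_shuffleSet_iff, and_comm]

lemma shuffleWord_injective : Function.Injective (shuffleWord m) := fun π π' h =>
  inv_injective <| Equiv.ext <| by simpa [shuffleWord, List.ofFn_inj, funext_iff] using h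

lemma exists_shuffleWord_eq_of_perm {π : Equiv.Perm (Fin m)} {w : List (Fin (m + 1))}
    (hw : w.Perm (shuffleWord m π)) : ∃ π', shuffleWord m π' = w := by
  obtain ⟨σ, hσ⟩ := (hw.trans (Equiv.Perm.ofFn_comp_perm π⁻¹ Fin.succ)).exists_ofFn_comp_eq
    (Fin.succ_injective m)
  exact ⟨σ⁻¹, by simpa [shuffleWord, Function.comp_def] using hσ⟩

lemma exists_mem_shuffleSet_of_filter_eq {π : Equiv.Perm (Fin m)} (hπ : π ∈ shuffleSet m p)
    {w : List (Fin (m + 1))}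
    (hw : ∀ b, w.filter (shuffleColor p · == b) =
      (shuffleWord m π).filter (shuffleColor p · == b)) :
    ∃ π' ∈ shuffleSet m p, shuffleWord m π' = w := by
  obtain ⟨π', rfl⟩ := exists_shuffleWord_eq_of_perm (List.perm_of_forall_filter_beq_eq hw)
  rw [mem_shuffleSet_iff_pairwise_filter] at hπ
  exact ⟨π', mem_shuffleSet_iff_pairwise_filter.2 fun b => hw b ▸ hπ b, rfl⟩

lemma mem_shuffleWord {π : Equiv.Perm (Fin m)} {a : Fin (m + 1)} :
    a ∈ shuffleWord m π ↔ a ≠ 0 := by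
  rw [← Fin.exists_succ_eq, shuffleWord, List.mem_ofFn]
  exact (π⁻¹.surjective.exists (p := fun j => j.succ = a)).symm

lemma bicolored_shuffleWord (hp : 0 < p) (hpm : p < m) (π : Equiv.Perm (Fin m)) :
    bicolored (shuffleColor p) (shuffleWord m π) := by
  simp only [bicolored, Bool.and_eq_true, List.any_eq_true, mem_shuffleWord, shuffleColor]
  exact ⟨⟨⟨1, by omega⟩, by simp [Fin.ext_iff], by simpa⟩,
    ⟨Fin.last m, by rw [Ne, Fin.ext_iff, Fin.val_last, Fin.val_zero]; omega, by simpa⟩⟩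

end Shuffles

/-- Shuffle relations for the Hodge correlators (Proposition 7.3.06.4/Corollary
7.3.06.2): for `p, q ≥ 1`, the element of the group `T¹_{(m)}` of oriented decorated
trees given by `∑_{σ∈Σ_{p,q}}` (sum over all plane trivalent trees decorated by
`(v₀, v_{σ(1)}, …, v_{σ(p+q)})`, with the orientation induced by the plane) is zero.
Equivalently: for every amplitude `I` — such as the Hodge correlator integrand — that
depends on a decorated plane trivalent tree only through the underlying abstract tree
and the plane-induced orientation (i.e. `I` changes sign under every flip), the total
correlator satisfies `∑_{σ∈Σ_{p,q}} Cor(C(v₀ ⊗ v_{σ(1)} ⊗ ⋯ ⊗ v_{σ(p+q)})) = 0`. -/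
theorem stmt13 (m p q : ℕ) (hp : 0 < p) (hq : 0 < q) (hm : p + q = m)
    (I : PTree (Fin (m + 1)) → ℂ)
    (hflip : ∀ t t' : PTree (Fin (m + 1)), PTree.Flip t t' → I t' = - I t) :
    ∑ π ∈ shuffleSet m p, ((planeTrees (shuffleWord m π)).map I).sum = 0 := by
  rw [← Finset.sum_image (f := fun w => ((planeTrees w).map I).sum) shuffleWord_injective.injOn]
  refine sum_planeTrees_eq_zero (shuffleColor p) I hflip _ ?_ ?_
  · simp only [Finset.mem_image]
    rintro _ ⟨π, -, rfl⟩
    exact bicolored_shuffleWord hp (by omega) π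
  · simp only [Finset.mem_image]
    rintro _ ⟨π, hπ, rfl⟩ w hw
    exact exists_mem_shuffleSet_of_filter_eq hπ hw
end

section
/- Let M be a complex manifold and N a linear operator on the graded algebra A*_M of smooth forms, acting by a scalar N_α on each homogeneous degree, and satisfying N_{α₁∘α₂} = N_{α₁} + N_{α₂}. Define a product ∘ on A*_M[−1] by N(α₁ ∘ … ∘ α_m) := ∑_{i} (−1)^{ᾱᵢ(ᾱ₁+…+ᾱ_{i−1})} N(αᵢ) ∧ d^C α₁ ∧ … ∧ (omit N(αᵢ) slot) … ∧ d^C α_m, where ᾱ denotes degree in A*_M[−1]. Then: (i) d^C(α₁ ∘ … ∘ α_m) = d^C α₁ ∧ … ∧ d^C α_m; (ii) ∘ is graded commutative and associative. -/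
/-- The binary case of the product (3.30.ups.3) on `A*_M[−1]`:
`α₁ ∘ α₂ := N⁻¹(N α₁ ∧ d^C α₂ + (−1)^{ᾱ₁ᾱ₂} N α₂ ∧ d^C α₁)`, where `N` acts on a
homogeneous form of degree `s` by the scalar `ν s`, and `ᾱ = |α| − 1` is the shifted
degree. -/
noncomputable def prodC {A : Type*} [Ring A] [Algebra ℚ A]
    (dC : A →ₗ[ℚ] A) (ν : ℤ → ℚ) (s t : ℤ) (x y : A) : A :=
  (ν (s + t - 1))⁻¹ • (ν s • (x * dC y) +
    ((((Int.negOnePow ((s - 1) * (t - 1)) : ℤˣ) : ℤ) : ℚ) * ν t) • (y * dC x))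

/-! Under `d^C`, the Leibniz rule and `(d^C)² = 0` turn `N(α ∘ β) = Nα ∧ d^Cβ ± Nβ ∧ d^Cα` into
`Nα d^Cα ∧ d^Cβ ± Nβ d^Cβ ∧ d^Cα`; the `d^C`-images commute with exactly the sign `(−1)^{ᾱβ̄}` of
the definition, so this is `(Nα + Nβ) d^Cα ∧ d^Cβ = N(α ∘ β) d^Cα ∧ d^Cβ`. Commutativity is a
rearrangement of the defining formula. For associativity, the first identity reduces both
bracketings of `α ∘ β ∘ γ` to the symmetric ternary product `prodC₃`, the case `m = 3` of the
general formula. -/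

local notation "ε" n:max => ((((Int.negOnePow n : ℤˣ) : ℤ) : ℚ))

lemma negOnePow_cast_mul_self (n : ℤ) : ε n * ε n = 1 := by
  rw [← Int.cast_mul, ← Units.val_mul, Int.units_mul_self, Units.val_one, Int.cast_one]

lemma negOnePow_cast_add (m n : ℤ) : ε (m + n) = ε m * ε n := by
  rw [Int.negOnePow_add, Units.val_mul, Int.cast_mul]

lemma negOnePow_cast_congr {m n : ℤ} (h : Even (m - n)) : ε m = ε n := by
  rw [(Int.negOnePow_eq_iff m n).2 h]

structure IsGradedCommDGA {A : Type*} [Ring A] [Algebra ℚ A]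
    (homog : ℤ → Submodule ℚ A) (dC : A →ₗ[ℚ] A) : Prop where
  mul_comm : ∀ (i j : ℤ) (x y : A), x ∈ homog i → y ∈ homog j →
    x * y = (((Int.negOnePow (i * j) : ℤˣ) : ℤ)) • (y * x)
  dC_dC : ∀ x, dC (dC x) = 0
  dC_mem : ∀ (i : ℤ) (x : A), x ∈ homog i → dC x ∈ homog (i + 1)
  dC_mul : ∀ (i : ℤ) (x y : A), x ∈ homog i →
    dC (x * y) = dC x * y + (((Int.negOnePow i : ℤˣ) : ℤ)) • (x * dC y)

section

variable {A : Type*} [Ring A] [Algebra ℚ A] {homog : ℤ → Submodule ℚ A} {dC : A →ₗ[ℚ] A}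

namespace IsGradedCommDGA

theorem dC_mul_dC (h : IsGradedCommDGA homog dC) {i : ℤ} {x : A} (y : A) (hx : x ∈ homog i) :
    dC (x * dC y) = dC x * dC y := by
  rw [h.dC_mul i x (dC y) hx, h.dC_dC, mul_zero, smul_zero, add_zero]

theorem dC_mul_dC_comm (h : IsGradedCommDGA homog dC) {s t : ℤ} {x y : A}
    (hx : x ∈ homog s) (hy : y ∈ homog t) :
    dC x * dC y = ε ((s - 1) * (t - 1)) • (dC y * dC x) := by
  rw [h.mul_comm _ _ _ _ (h.dC_mem s x hx) (h.dC_mem t y hy), ← Int.cast_smul_eq_zsmul ℚ,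
    negOnePow_cast_congr (m := (s + 1) * (t + 1)) (n := (s - 1) * (t - 1)) ⟨s + t, by ring⟩]

end IsGradedCommDGA

variable (dC) (ν : ℤ → ℚ)

theorem smul_prodC {s t : ℤ} (hst : ν (s + t - 1) ≠ 0) (x y : A) :
    ν (s + t - 1) • prodC dC ν s t x y
      = ν s • (x * dC y) + (ε ((s - 1) * (t - 1)) * ν t) • (y * dC x) := by
  rw [prodC, smul_inv_smul₀ hst]

theorem prodC_comm (s t : ℤ) (x y : A) :
    prodC dC ν s t x y = ε ((s - 1) * (t - 1)) • prodC dC ν t s y x := by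
  have hε := negOnePow_cast_mul_self ((s - 1) * (t - 1))
  rw [prodC, prodC, add_comm t s, mul_comm (t - 1)]
  match_scalars
  · linear_combination -(ν (s + t - 1))⁻¹ * ν s * hε
  · ring

theorem dC_prodC (h : IsGradedCommDGA homog dC) (hν : ∀ s t : ℤ, ν (s + t - 1) = ν s + ν t)
    {s t : ℤ} (hst : ν (s + t - 1) ≠ 0) {x y : A} (hx : x ∈ homog s) (hy : y ∈ homog t) :
    dC (prodC dC ν s t x y) = dC x * dC y := by
  have hε := negOnePow_cast_mul_self ((s - 1) * (t - 1))
  have hsum : ν s • (dC x * dC y) + (ε ((s - 1) * (t - 1)) * ν t) • (dC y * dC x)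
      = ν (s + t - 1) • (dC x * dC y) := by
    rw [h.dC_mul_dC_comm hy hx, mul_comm (t - 1), smul_smul, ← add_smul, hν]
    congr 1
    linear_combination ν t * hε
  rw [prodC, map_smul, map_add, map_smul, map_smul, h.dC_mul_dC y hx, h.dC_mul_dC x hy, hsum,
    inv_smul_smul₀ hst]

noncomputable def prodC₃ (s t u : ℤ) (x y z : A) : A :=
  (ν (s + t + u - 2))⁻¹ • (ν s • (x * (dC y * dC z))
    + (ε ((s - 1) * (t - 1)) * ν t) • (y * (dC x * dC z))
    + (ε ((s - 1) * (u - 1)) * ε ((t - 1) * (u - 1)) * ν u) • (z * (dC x * dC y)))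

theorem prodC_prodC_left (h : IsGradedCommDGA homog dC)
    (hν : ∀ s t : ℤ, ν (s + t - 1) = ν s + ν t) {s t u : ℤ} (hst : ν (s + t - 1) ≠ 0)
    {x y : A} (hx : x ∈ homog s) (hy : y ∈ homog t) (z : A) :
    prodC dC ν (s + t - 1) u (prodC dC ν s t x y) z = prodC₃ dC ν s t u x y z := by
  rw [prodC, dC_prodC dC ν h hν hst hx hy, ← smul_mul_assoc (ν (s + t - 1)),
    smul_prodC dC ν hst, show s + t - 1 + u - 1 = s + t + u - 2 by ring,
    negOnePow_cast_congr (m := (s + t - 1 - 1) * (u - 1))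
      (n := (s - 1) * (u - 1) + (t - 1) * (u - 1)) ⟨0, by ring⟩, negOnePow_cast_add, prodC₃]
  simp only [add_mul, smul_mul_assoc, mul_assoc]

theorem prodC_prodC_right (h : IsGradedCommDGA homog dC)
    (hν : ∀ s t : ℤ, ν (s + t - 1) = ν s + ν t) {s t u : ℤ} (htu : ν (t + u - 1) ≠ 0)
    {x y z : A} (hx : x ∈ homog s) (hy : y ∈ homog t) (hz : z ∈ homog u) :
    prodC dC ν s (t + u - 1) x (prodC dC ν t u y z) = prodC₃ dC ν s t u x y z := by
  rw [prodC, dC_prodC dC ν h hν htu hy hz, mul_smul, ← smul_mul_assoc (ν (t + u - 1)),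
    smul_prodC dC ν htu, show s + (t + u - 1) - 1 = s + t + u - 2 by ring,
    negOnePow_cast_congr (m := (s - 1) * (t + u - 1 - 1))
      (n := (s - 1) * (t - 1) + (s - 1) * (u - 1)) ⟨0, by ring⟩, negOnePow_cast_add, prodC₃,
    h.dC_mul_dC_comm hx hy, h.dC_mul_dC_comm hx hz]
  simp only [add_mul, smul_mul_assoc, mul_assoc, mul_smul_comm]
  module

theorem prodC_assoc (h : IsGradedCommDGA homog dC)
    (hν : ∀ s t : ℤ, ν (s + t - 1) = ν s + ν t) {s t u : ℤ}
    (hst : ν (s + t - 1) ≠ 0) (htu : ν (t + u - 1) ≠ 0)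
    {x y z : A} (hx : x ∈ homog s) (hy : y ∈ homog t) (hz : z ∈ homog u) :
    prodC dC ν (s + t - 1) u (prodC dC ν s t x y) z
      = prodC dC ν s (t + u - 1) x (prodC dC ν t u y z) := by
  rw [prodC_prodC_left dC ν h hν hst hx hy, prodC_prodC_right dC ν h hν htu hx hy hz]

end

theorem stmt14_general {A : Type*} [Ring A] [Algebra ℚ A]
    (homog : ℤ → Submodule ℚ A)
    (hcomm : ∀ (i j : ℤ) (x y : A), x ∈ homog i → y ∈ homog j →
      x * y = (((Int.negOnePow (i * j) : ℤˣ) : ℤ)) • (y * x))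
    (dC : A →ₗ[ℚ] A)
    (hd2 : ∀ x, dC (dC x) = 0)
    (hdeg : ∀ (i : ℤ) (x : A), x ∈ homog i → dC x ∈ homog (i + 1))
    (hleib : ∀ (i : ℤ) (x y : A), x ∈ homog i →
      dC (x * y) = dC x * y + (((Int.negOnePow i : ℤˣ) : ℤ)) • (x * dC y))
    (ν : ℤ → ℚ) (hν : ∀ s t : ℤ, ν (s + t - 1) = ν s + ν t)
    (a b c : A) (s t u : ℤ)
    (ha : a ∈ homog s) (hb : b ∈ homog t) (hc : c ∈ homog u)
    (hst : ν (s + t - 1) ≠ 0) (htu : ν (t + u - 1) ≠ 0) :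
    dC (prodC dC ν s t a b) = dC a * dC b ∧
    prodC dC ν s t a b
      = ((((Int.negOnePow ((s - 1) * (t - 1)) : ℤˣ) : ℤ) : ℚ)) • prodC dC ν t s b a ∧
    prodC dC ν (s + t - 1) u (prodC dC ν s t a b) c
      = prodC dC ν s (t + u - 1) a (prodC dC ν t u b c) := by
  have h : IsGradedCommDGA homog dC := ⟨hcomm, hd2, hdeg, hleib⟩
  exact ⟨dC_prodC dC ν h hν hst ha hb, prodC_comm dC ν s t a b,
    prodC_assoc dC ν h hν hst htu ha hb hc⟩

/-- Let `M` be a complex manifold, `A` its graded-commutative algebra of smooth forms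
(abstracted: graded-commutative, with `d^C = ∂ − ∂̄` an odd derivation of square zero),
and `N` an operator acting by a scalar `ν s` on degree-`s` forms and additive for `∘`
(i.e. `ν(s + t − 1) = ν s + ν t`, the degree of `α∘β` being `|α| + |β| − 1`).
Then, on homogeneous forms of degrees where `N` is invertible:
(i) `d^C(α₁ ∘ α₂) = d^C α₁ ∧ d^C α₂`;
(ii) `∘` is graded commutative for the shifted degrees; and
(iii) `∘` is associative. -/
theorem stmt14 {A : Type*} [Ring A] [Algebra ℚ A]
    (homog : ℤ → Submodule ℚ A)
    (hcomm : ∀ (i j : ℤ) (x y : A), x ∈ homog i → y ∈ homog j →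
      x * y = (((Int.negOnePow (i * j) : ℤˣ) : ℤ)) • (y * x))
    (dC : A →ₗ[ℚ] A)
    (hd2 : ∀ x, dC (dC x) = 0)
    (hdeg : ∀ (i : ℤ) (x : A), x ∈ homog i → dC x ∈ homog (i + 1))
    (hleib : ∀ (i : ℤ) (x y : A), x ∈ homog i →
      dC (x * y) = dC x * y + (((Int.negOnePow i : ℤˣ) : ℤ)) • (x * dC y))
    (ν : ℤ → ℚ) (hν : ∀ s t : ℤ, ν (s + t - 1) = ν s + ν t)
    (a b c : A) (s t u : ℤ)
    (ha : a ∈ homog s) (hb : b ∈ homog t) (hc : c ∈ homog u)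
    (hst : ν (s + t - 1) ≠ 0) (htu : ν (t + u - 1) ≠ 0) (hstu : ν (s + t + u - 2) ≠ 0) :
    dC (prodC dC ν s t a b) = dC a * dC b ∧
    prodC dC ν s t a b
      = ((((Int.negOnePow ((s - 1) * (t - 1)) : ℤˣ) : ℤ) : ℚ)) • prodC dC ν t s b a ∧
    prodC dC ν (s + t - 1) u (prodC dC ν s t a b) c
      = prodC dC ν s (t + u - 1) a (prodC dC ν t u b c) :=
  stmt14_general homog hcomm dC hd2 hdeg hleib ν hν a b c s t u ha hb hc hst htu
end
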